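/- Fix n ≥ 0 and let M_n⁺ = {(R,m,t) ∈ (ℕ →₀ ℕ) × ℤ × ℤ : R i = 0 for all i > n, and t ≥ 0}. Let S_n⁺ = {(R,m,t) ∈ M_n⁺ : m ≠ 0, v₂(m) ≤ n, and R i = 0 for every i < v₂(m)} and T_n⁺ = {(R,m,t) ∈ M_n⁺ : R ≠ 0, 2^(min(R)+1) divides m, and t ≥ 2^(min(R)+1) − 1} (the targets whose corresponding source has nonnegative filtration). Then S_n⁺ and T_n⁺ are disjoint, Φ restricts to a bijection from S_n⁺ onto T_n⁺, and the complement of S_n⁺ ∪ T_n⁺ in M_n⁺ is exactly {(R,m,t) ∈ M_n⁺ : R = 0 and 2^(n+1) divides m} ∪ {(R,m,t) ∈ M_n⁺ : R ≠ 0, 2^(min(R)+1) divides m, and 0 ≤ t ≤ 2^(min(R)+1) − 2}. (These survivors index the additive generators of the Borel cohomology coefficients F(Eℤ/2₊, BPℝ⟨n⟩)_⋆ = (ℤ_(2)[v_k σ^(l·2^(k+1)), a]/∼) ⊕ ℤ/2[σ^(2^(n+1)), σ^(−2^(n+1)), a] of Theorem 2.1(2).) -/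

import Mathlib

/-!
Monomials `v_R σ^m a^t` in the E₁-term `BP⟨n⟩_*[σ, σ⁻¹, a]` of the Borel
cohomology spectral sequence for the Real Johnson–Wilson spectrum `BPℝ⟨n⟩` are
encoded by triples `(R, m, t) ∈ (ℕ →₀ ℕ) × ℤ × ℤ` with `R` supported in
`{0, …, n}` and `t ≥ 0`.
-/

/-- The 2-adic valuation of an integer. -/
noncomputable def v2 (m : ℤ) : ℕ := padicValInt 2 m

/-- `min R`: the least `i` with `R i ≠ 0` (for `R ≠ 0`). -/
noncomputable def minR (R : ℕ →₀ ℕ) : ℕ := sInf {i | R i ≠ 0}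

/-- The differential on monomials:
`Φ(R, m, t) = (R + e_{v₂(m)}, m + 2^(v₂(m)), t + 2^(v₂(m)+1) − 1)`. -/
noncomputable def Φ : (ℕ →₀ ℕ) × ℤ × ℤ → (ℕ →₀ ℕ) × ℤ × ℤ := fun x =>
  (x.1 + Finsupp.single (v2 x.2.1) 1,
   x.2.1 + 2 ^ v2 x.2.1,
   x.2.2 + 2 ^ (v2 x.2.1 + 1) - 1)

/-- `Mp n`: monomials of `BP⟨n⟩_*[σ, σ⁻¹, a]`, i.e. `R i = 0` for `i > n`,
and `t ≥ 0`. -/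
def Mp (n : ℕ) : Set ((ℕ →₀ ℕ) × ℤ × ℤ) := {x | (∀ i > n, x.1 i = 0) ∧ 0 ≤ x.2.2}

/-- `Sp n`: the sources of nonzero differentials in the Borel cohomology
spectral sequence for `BPℝ⟨n⟩`: `m ≠ 0`, `v₂(m) ≤ n`, and `R i = 0` for every
`i < v₂(m)`. -/
def Sp (n : ℕ) : Set ((ℕ →₀ ℕ) × ℤ × ℤ) :=
  {x ∈ Mp n | x.2.1 ≠ 0 ∧ v2 x.2.1 ≤ n ∧ ∀ i < v2 x.2.1, x.1 i = 0}

/-- `Tp n`: the targets whose corresponding source has nonnegative filtration: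
`R ≠ 0`, `2^(min(R)+1) ∣ m`, and `t ≥ 2^(min(R)+1) − 1`. -/
def Tp (n : ℕ) : Set ((ℕ →₀ ℕ) × ℤ × ℤ) :=
  {x ∈ Mp n | x.1 ≠ 0 ∧ (2 : ℤ) ^ (minR x.1 + 1) ∣ x.2.1 ∧
    (2 : ℤ) ^ (minR x.1 + 1) - 1 ≤ x.2.2}

/-!
Write `k = min R` if `R ≠ 0` and `k = n` if `R = 0`. For `x = (R, m, t) ∈ Mp n`, the conditions
`v₂(m) ≤ n` and `R i = 0` for `i < v₂(m)` say exactly `v₂(m) ≤ k` (as `min R ≤ n`), so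
`x ∈ Sp n` iff `2^(k+1) ∤ m`. The survivors are therefore the `x` with `2^(k+1) ∣ m` that are not
targets. The differential `Φ` adds one `v_{v₂(m)}`, which becomes the new `v_{min R}`, and turns
`m = 2^s · odd` into a multiple of `2^(s+1)`; removing one `v_{min R}` and subtracting `2^(min R)`
from `m` undoes it, so `Φ` is a bijection `Sp n → Tp n`.
-/

lemma two_pow_dvd_iff_v2 {s : ℕ} {m : ℤ} : (2 : ℤ) ^ s ∣ m ↔ m = 0 ∨ s ≤ v2 m := by
  simpa [v2] using padicValInt_dvd_iff (p := 2) s m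

lemma not_two_pow_succ_dvd_iff {s : ℕ} {m : ℤ} :
    ¬ (2 : ℤ) ^ (s + 1) ∣ m ↔ m ≠ 0 ∧ v2 m ≤ s := by
  rw [two_pow_dvd_iff_v2]
  omega

lemma two_pow_v2_succ_dvd_add {m : ℤ} (hm : m ≠ 0) : (2 : ℤ) ^ (v2 m + 1) ∣ m + 2 ^ v2 m := by
  obtain ⟨u, hu⟩ : (2 : ℤ) ^ v2 m ∣ m := two_pow_dvd_iff_v2.mpr (Or.inr le_rfl)
  have hu_odd : Odd u := by
    rw [← Int.not_even_iff_odd, even_iff_two_dvd]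
    rintro ⟨k, rfl⟩
    exact not_two_pow_succ_dvd_iff.mpr ⟨hm, le_rfl⟩ ⟨k, by rw [pow_succ]; linear_combination hu⟩
  obtain ⟨k, rfl⟩ := hu_odd
  exact ⟨k + 1, by rw [pow_succ]; linear_combination hu⟩

lemma v2_sub_two_pow {s : ℕ} {m : ℤ} (h : (2 : ℤ) ^ (s + 1) ∣ m) :
    m - 2 ^ s ≠ 0 ∧ v2 (m - 2 ^ s) = s := by
  have h_not_dvd : ¬ (2 : ℤ) ^ (s + 1) ∣ m - 2 ^ s := fun h' => by
    have h_pow : (2 : ℤ) ^ (s + 1) ∣ 2 ^ s := by simpa using dvd_sub h h'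
    rw [pow_dvd_pow_iff two_ne_zero (by simp [Int.isUnit_iff])] at h_pow
    omega
  have h_dvd : (2 : ℤ) ^ s ∣ m - 2 ^ s := dvd_sub ((pow_dvd_pow 2 s.le_succ).trans h) dvd_rfl
  obtain ⟨hne, hle⟩ := not_two_pow_succ_dvd_iff.mp h_not_dvd
  have hge := two_pow_dvd_iff_v2.mp h_dvd
  exact ⟨hne, by omega⟩

lemma minR_le {R : ℕ →₀ ℕ} {i : ℕ} (h : R i ≠ 0) : minR R ≤ i := Nat.sInf_le h

lemma apply_minR_ne_zero {R : ℕ →₀ ℕ} (hR : R ≠ 0) : R (minR R) ≠ 0 := by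
  obtain ⟨i, hi⟩ := Finsupp.ne_iff.mp hR
  exact Nat.sInf_mem (s := {i | R i ≠ 0}) ⟨i, hi⟩

lemma forall_lt_apply_eq_zero_iff {R : ℕ →₀ ℕ} {s : ℕ} :
    (∀ i < s, R i = 0) ↔ R = 0 ∨ s ≤ minR R := by
  constructor
  · intro h
    by_contra! hc
    exact apply_minR_ne_zero hc.1 (h _ hc.2)
  · rintro (rfl | hs) i hi
    · rfl
    · by_contra h
      exact absurd (minR_le h) (by omega)

lemma minR_le_of_forall_gt {R : ℕ →₀ ℕ} {n : ℕ} (hR : R ≠ 0) (hn : ∀ i > n, R i = 0) :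
    minR R ≤ n := by
  by_contra! h
  exact apply_minR_ne_zero hR (hn _ h)

lemma minR_add_single {R : ℕ →₀ ℕ} {s : ℕ} (h : ∀ i < s, R i = 0) :
    minR (R + Finsupp.single s 1) = s := by
  have h_ne : (R + Finsupp.single s 1 : ℕ →₀ ℕ) s ≠ 0 := by simp
  have h_ge : ∀ i < s, (R + Finsupp.single s 1 : ℕ →₀ ℕ) i = 0 := fun i hi => by
    simp [h i hi, hi.ne]
  rcases forall_lt_apply_eq_zero_iff.mp h_ge with h0 | h_ge
  · simp [h0] at h_ne
  · exact le_antisymm (minR_le h_ne) h_ge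

section

variable {n : ℕ} {x : (ℕ →₀ ℕ) × ℤ × ℤ}

lemma mem_Sp_iff_of_eq_zero (hx : x ∈ Mp n) (hR : x.1 = 0) :
    x ∈ Sp n ↔ ¬ (2 : ℤ) ^ (n + 1) ∣ x.2.1 := by
  simp [Sp, hx, not_two_pow_succ_dvd_iff, hR]

lemma mem_Sp_iff_of_ne_zero (hx : x ∈ Mp n) (hR : x.1 ≠ 0) :
    x ∈ Sp n ↔ ¬ (2 : ℤ) ^ (minR x.1 + 1) ∣ x.2.1 := by
  have h_le := minR_le_of_forall_gt hR hx.1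
  simp only [Sp, Set.mem_ofPred_eq, hx, true_and, not_two_pow_succ_dvd_iff,
    forall_lt_apply_eq_zero_iff, hR, false_or]
  omega

lemma notMem_Sp_of_mem_Tp (hx : x ∈ Tp n) : x ∉ Sp n :=
  fun hS => (mem_Sp_iff_of_ne_zero hx.1 hx.2.1).mp hS hx.2.2.1

end

noncomputable def Φinv (x : (ℕ →₀ ℕ) × ℤ × ℤ) : (ℕ →₀ ℕ) × ℤ × ℤ :=
  (x.1 - Finsupp.single (minR x.1) 1, x.2.1 - 2 ^ minR x.1, x.2.2 - (2 ^ (minR x.1 + 1) - 1))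

lemma mapsTo_Φ_Sp_Tp (n : ℕ) : Set.MapsTo Φ (Sp n) (Tp n) := by
  rintro ⟨R, m, t⟩ ⟨⟨hR, ht⟩, hm, hv, hlt⟩
  dsimp only at hR ht hm hv hlt
  have h_min : minR (R + Finsupp.single (v2 m) 1) = v2 m := minR_add_single hlt
  have h_pow : (1 : ℤ) ≤ 2 ^ (v2 m + 1) := one_le_pow₀ (by norm_num)
  refine ⟨⟨fun i hi => ?_, ?_⟩, fun h0 => ?_, ?_, ?_⟩
  · simp [Φ, hR i hi, (show v2 m ≠ i by omega)]
  · simp only [Φ]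
    linarith
  · simpa [Φ] using DFunLike.congr_fun h0 (v2 m)
  · simpa only [Φ, h_min] using two_pow_v2_succ_dvd_add hm
  · simp only [Φ, h_min]
    linarith

lemma mapsTo_Φinv_Tp_Sp (n : ℕ) : Set.MapsTo Φinv (Tp n) (Sp n) := by
  rintro ⟨R, m, t⟩ ⟨⟨hR, ht⟩, hR0, hdvd, hge⟩
  dsimp only at hR ht hR0 hdvd hge
  obtain ⟨hm, hv⟩ := v2_sub_two_pow hdvd
  refine ⟨⟨fun i hi => by simp [Φinv, hR i hi], by simp only [Φinv]; linarith⟩, hm, ?_, ?_⟩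
  · simpa [Φinv, hv] using minR_le_of_forall_gt hR0 hR
  · intro i hi
    simp only [Φinv, hv] at hi
    simp [Φinv, forall_lt_apply_eq_zero_iff.mpr (Or.inr le_rfl) i hi]

lemma leftInvOn_Φinv_Φ (n : ℕ) : Set.LeftInvOn Φinv Φ (Sp n) := by
  rintro ⟨R, m, t⟩ ⟨-, -, -, hlt⟩
  simp [Φinv, Φ, minR_add_single hlt]

lemma rightInvOn_Φinv_Φ (n : ℕ) : Set.RightInvOn Φinv Φ (Tp n) := by
  rintro ⟨R, m, t⟩ ⟨-, hR0, hdvd, -⟩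
  dsimp only at hR0 hdvd
  have h_single : Finsupp.single (minR R) 1 ≤ R :=
    Finsupp.single_le_iff.mpr (Nat.one_le_iff_ne_zero.mpr (apply_minR_ne_zero hR0))
  simp only [Φ, Φinv, (v2_sub_two_pow hdvd).2, tsub_add_cancel_of_le h_single, sub_add_cancel,
    Prod.mk.injEq, true_and]
  ring

lemma bijOn_Φ_Sp_Tp (n : ℕ) : Set.BijOn Φ (Sp n) (Tp n) :=
  Set.InvOn.bijOn ⟨leftInvOn_Φinv_Φ n, rightInvOn_Φinv_Φ n⟩ (mapsTo_Φ_Sp_Tp n)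
    (mapsTo_Φinv_Tp_Sp n)

lemma Mp_diff_Sp_union_Tp (n : ℕ) :
    Mp n \ (Sp n ∪ Tp n) =
      {x ∈ Mp n | x.1 = 0 ∧ (2 : ℤ) ^ (n + 1) ∣ x.2.1} ∪
      {x ∈ Mp n | x.1 ≠ 0 ∧ (2 : ℤ) ^ (minR x.1 + 1) ∣ x.2.1 ∧
        0 ≤ x.2.2 ∧ x.2.2 ≤ (2 : ℤ) ^ (minR x.1 + 1) - 2} := by
  ext x
  by_cases hx : x ∈ Mp n
  · rcases eq_or_ne x.1 0 with hR | hR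
    · simp [hx, hR, mem_Sp_iff_of_eq_zero hx hR, Tp]
    · simp [hx, hR, mem_Sp_iff_of_ne_zero hx hR, Tp, hx.2]
      omega
  · simp [hx]

theorem borel_spectral_sequence_BPRn (n : ℕ) :
    -- `Sp n` and `Tp n` are disjoint
    Disjoint (Sp n) (Tp n) ∧
    -- `Φ` restricts to a bijection from `Sp n` onto `Tp n`
    Set.BijOn Φ (Sp n) (Tp n) ∧
    -- the survivors: the complement of `Sp n ∪ Tp n` in `Mp n` is exactly the
    -- set of monomials with `R = 0` and `2^(n+1) ∣ m`, together with those
    -- with `R ≠ 0`, `2^(min(R)+1) ∣ m` and `0 ≤ t ≤ 2^(min(R)+1) − 2`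
    Mp n \ (Sp n ∪ Tp n) =
      {x ∈ Mp n | x.1 = 0 ∧ (2 : ℤ) ^ (n + 1) ∣ x.2.1} ∪
      {x ∈ Mp n | x.1 ≠ 0 ∧ (2 : ℤ) ^ (minR x.1 + 1) ∣ x.2.1 ∧
        0 ≤ x.2.2 ∧ x.2.2 ≤ (2 : ℤ) ^ (minR x.1 + 1) - 2} :=
  ⟨Set.disjoint_right.mpr fun _ => notMem_Sp_of_mem_Tp, bijOn_Φ_Sp_Tp n, Mp_diff_Sp_union_Tp n⟩
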